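/- Let G be a simple graph on a finite vertex type with G.IsSRGWith n k e d, with 2 ≤ n, and assume both G and Gᶜ are connected. Then E(G) = E(Gᶜ) if and only if one of the following holds: (a) 1 ≤ d, n = 4*d+1, k = 2*d and e + 1 = d (G is a conference graph); or (b) there exist h ℓ : ℤ with 1 ≤ ℓ, ℓ ∉ {h, -h, h+1, -(h+1)}, (n:ℤ) = 4*ℓ^2, (k:ℤ) = (ℓ-h)*(2*ℓ-1), (e:ℤ) = (d:ℤ) + 2*h and (d:ℤ) = (ℓ-h)*(ℓ-h-1); or (c) there exist h ℓ : ℤ with h ≠ 0, 1 ≤ ℓ, ℓ ∉ {h, -h, -(h+1), h-1}, (n:ℤ) = (2*ℓ+1)^2, (k:ℤ) = 2*ℓ*(ℓ-h+1), (e:ℤ) = (d:ℤ) + 2*h - 1 and (d:ℤ) = (ℓ-h)*(ℓ-h+1). -/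

import Mathlib

open Finset

/-- The adjacency matrix of a simple graph over `ℝ` is Hermitian. -/
lemma adjMatrix_isHermitian {V : Type*} [Fintype V] (G : SimpleGraph V) [DecidableRel G.Adj] :
    (G.adjMatrix ℝ).IsHermitian := by
  rw [Matrix.IsHermitian, Matrix.conjTranspose_eq_transpose_of_trivial]
  exact G.isSymm_adjMatrix

/-- The eigenvalues (with multiplicity) of the real adjacency matrix of a simple graph. -/
noncomputable def adjEig {V : Type*} [Fintype V] [DecidableEq V] (G : SimpleGraph V) : V → ℝ := by
  classical
  exact (adjMatrix_isHermitian G).eigenvalues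

/-- The energy of a graph : the sum of the absolute values of its adjacency eigenvalues. -/
noncomputable def energy {V : Type*} [Fintype V] [DecidableEq V] (G : SimpleGraph V) : ℝ :=
  ∑ i, |adjEig G i|

/-- The characteristic polynomial of the real adjacency matrix of a simple graph. -/
noncomputable def charpolyOf {V : Type*} [Fintype V] [DecidableEq V] (G : SimpleGraph V) :
    Polynomial ℝ := by
  classical
  exact (G.adjMatrix ℝ).charpoly

/-!
The eigenvalues of a primitive strongly regular graph are `k`, `r ≥ 0` and `s < 0`, where
`r, s` are the roots of `x² - (e - d) x - (k - d)`; those of its complement are `n - 1 - k`,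
`-1 - s` and `-1 - r`. On `{k, r, s}` the function `|x|` coincides with its quadratic
interpolant, so the energy is a linear combination of `n`, `tr A = 0` and `tr A² = n k`. Comparing the two closed forms, `E(G) = E(Gᶜ)` becomes
`k (1 + r) = (n - 1 - k) (-s)`. If `n ≠ 2 k + 1` this equation is linear in `r` with rational
coefficients, so `r` is a rational algebraic integer, hence `r = R` and `s = -M` are integers;
the equation together with `k (k - e - 1) = (n - k - 1) d` then forces `d = M (M - 1)`,
`k = M (R + M - 1)` and `n = (R + M)²`, and the parity of `R + M` gives the two families.
If `n = 2 k + 1` the equation says `r + s = -1`, which is the conference graph case.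
-/

open Matrix Polynomial

theorem Real.exists_intCast_eq_of_mul_eq_of_sq_eq {x : ℝ} {a b c m : ℤ} (hm : m ≠ 0)
    (hx : x * m = c) (hsq : x ^ 2 = a * x + b) : ∃ z : ℤ, x = z := by
  set q : ℚ := c / m
  have hxq : x = q := by
    rw [Rat.cast_div, Rat.cast_intCast, Rat.cast_intCast, ← hx, mul_div_cancel_right₀]
    exact_mod_cast hm
  have hq : q ^ 2 = a * q + b := by exact_mod_cast hxq ▸ hsq
  have : IsIntegral ℤ q :=
    ⟨X ^ 2 - C a * X - C b, by monicity!, by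
      simp only [eval₂_sub, eval₂_mul, eval₂_X_pow, eval₂_X, eval₂_C]
      simp only [eq_intCast]
      linear_combination hq⟩
  obtain ⟨z, hz⟩ := IsIntegrallyClosed.isIntegral_iff.mp this
  exact ⟨z, by rw [hxq, ← hz]; simp⟩

theorem eq_and_eq_of_add_eq_add_of_mul_eq_mul {r s a b : ℝ} (hsr : s < r) (hba : b < a)
    (hsum : r + s = a + b) (hprod : r * s = a * b) : r = a ∧ s = b := by
  have : (r - a) * (r - b) = 0 := by linear_combination r * hsum - hprod
  rcases mul_eq_zero.mp this with h | h
  · constructor <;> linarith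
  · nlinarith

theorem exists_pos_neg_add_eq_mul_eq (p : ℝ) {q : ℝ} (hq : q < 0) :
    ∃ r s : ℝ, 0 < r ∧ s < 0 ∧ r + s = p ∧ r * s = q := by
  have hdisc : |p| < √(p ^ 2 - 4 * q) := (Real.lt_sqrt (abs_nonneg p)).mpr (by
    rw [sq_abs]; linarith)
  have ht : √(p ^ 2 - 4 * q) ^ 2 = p ^ 2 - 4 * q := Real.sq_sqrt (by nlinarith)
  obtain ⟨hlt, hgt⟩ := abs_lt.mp hdisc
  exact ⟨(p + √(p ^ 2 - 4 * q)) / 2, (p - √(p ^ 2 - 4 * q)) / 2, by linarith, by linarith,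
    by ring, by linear_combination -ht / 4⟩

/-- Lagrange interpolation of `|·|` at the nodes `a, b ≥ 0 > c`. -/
theorem abs_eq_of_eq_or_eq_or_eq {x a b c : ℝ} (ha : 0 ≤ a) (hb : 0 ≤ b) (hc : c < 0)
    (hx : x = a ∨ x = b ∨ x = c) :
    |x| = x - 2 * c / ((a - c) * (b - c)) * ((x - a) * (x - b)) := by
  have hac : a - c ≠ 0 := by linarith
  have hbc : b - c ≠ 0 := by linarith
  rcases hx with rfl | rfl | rfl
  · simp [abs_of_nonneg ha]
  · simp [abs_of_nonneg hb]
  · rw [abs_of_neg hc]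
    field_simp
    ring

def ConferenceParams (n k e d : ℕ) : Prop :=
  1 ≤ d ∧ n = 4 * d + 1 ∧ k = 2 * d ∧ e + 1 = d

def EvenSquareParams (n k e d : ℕ) : Prop :=
  ∃ h' ℓ : ℤ, 1 ≤ ℓ ∧ ℓ ≠ h' ∧ ℓ ≠ -h' ∧ ℓ ≠ h' + 1 ∧ ℓ ≠ -(h' + 1) ∧
    (n : ℤ) = 4 * ℓ ^ 2 ∧ (k : ℤ) = (ℓ - h') * (2 * ℓ - 1) ∧
    (e : ℤ) = (d : ℤ) + 2 * h' ∧ (d : ℤ) = (ℓ - h') * (ℓ - h' - 1)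

def OddSquareParams (n k e d : ℕ) : Prop :=
  ∃ h' ℓ : ℤ, h' ≠ 0 ∧ 1 ≤ ℓ ∧ ℓ ≠ h' ∧ ℓ ≠ -h' ∧ ℓ ≠ -(h' + 1) ∧ ℓ ≠ h' - 1 ∧
    (n : ℤ) = (2 * ℓ + 1) ^ 2 ∧ (k : ℤ) = 2 * ℓ * (ℓ - h' + 1) ∧
    (e : ℤ) = (d : ℤ) + 2 * h' - 1 ∧ (d : ℤ) = (ℓ - h') * (ℓ - h' + 1)

/-- Parameters whose restricted eigenvalues are the integers `R` and `-M`
(`R - M = e - d`, `R M = k - d`) and satisfy `k (1 + R) = (n - 1 - k) M`. -/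
def SquareParams (n k e d : ℕ) (R M : ℤ) : Prop :=
  (n : ℤ) = (R + M) ^ 2 ∧ (k : ℤ) = M * (R + M - 1) ∧ (d : ℤ) = M * (M - 1) ∧
    (e : ℤ) = d + R - M

section Parameters

variable {n k e d : ℕ}

theorem ConferenceParams.eq (h : ConferenceParams n k e d) : (n : ℤ) = 2 * k + 1 := by
  obtain ⟨-, hn, hk, -⟩ := h
  omega

theorem EvenSquareParams.ne (h : EvenSquareParams n k e d) : (n : ℤ) ≠ 2 * k + 1 := by
  obtain ⟨-, ℓ, -, -, -, -, -, hn, -⟩ := h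
  omega

theorem OddSquareParams.ne (h : OddSquareParams n k e d) : (n : ℤ) ≠ 2 * k + 1 := by
  obtain ⟨h', ℓ, hh', hℓ, -, -, -, -, hn, hk, -⟩ := h
  intro hconf
  have : 4 * ℓ * h' = 0 := by linear_combination hconf - hn + 2 * hk
  simp only [mul_eq_zero] at this
  omega

theorem SquareParams.mul_eq {R M : ℤ} (h : SquareParams n k e d R M) : R * M = k - d := by
  obtain ⟨-, hk, hd, -⟩ := h
  linear_combination -hk + hd

theorem SquareParams.mul_one_add_eq {R M : ℤ} (h : SquareParams n k e d R M) :
    (k : ℤ) * (1 + R) = (n - 1 - k) * M := by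
  obtain ⟨hn, hk, -, -⟩ := h
  linear_combination (1 + R + M) * hk - M * hn

theorem squareParams_of_mul_one_add_eq {R M : ℤ} (hkn : k + 1 < n) (hM : M ≠ 0)
    (hparam : (k : ℤ) * (k - e - 1) = (n - k - 1) * d)
    (hsum : R - M = e - d) (hprod : R * M = k - d) (hkey : (k : ℤ) * (1 + R) = (n - 1 - k) * M) :
    SquareParams n k e d R M := by
  have hnk : (n : ℤ) - k - 1 ≠ 0 := by omega
  have hd : (d : ℤ) = M * (M - 1) := mul_left_cancel₀ hnk <| by
    linear_combination -hparam + (M - 1) * hkey + k * hsum - k * hprod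
  have hk : (k : ℤ) = M * (R + M - 1) := by linear_combination -hprod + hd
  refine ⟨?_, hk, hd, by linear_combination -hsum⟩
  have := mul_left_cancel₀ hM (by linear_combination -hkey + (R + 1) * hk :
    M * (n - 1 - k) = M * ((R + M - 1) * (R + 1)))
  linear_combination this + hk

theorem evenSquareParams_or_oddSquareParams_iff (hd : 0 < d) (hdk : d < k)
    (hconf : (n : ℤ) ≠ 2 * k + 1) :
    EvenSquareParams n k e d ∨ OddSquareParams n k e d ↔
      ∃ R M : ℤ, 0 < M ∧ SquareParams n k e d R M := by
  constructor
  · rintro (⟨h', ℓ, hℓ, -, -, -, -, hn, hk, he, hd'⟩ | ⟨h', ℓ, -, hℓ, -, -, -, -, hn, hk, he, hd'⟩)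
    · refine ⟨ℓ + h', ℓ - h', ?_, by linear_combination hn, by linear_combination hk,
        by linear_combination hd', by linear_combination he⟩
      nlinarith
    · refine ⟨ℓ + h', ℓ - h' + 1, ?_, by linear_combination hn, by linear_combination hk,
        by linear_combination hd', by linear_combination he⟩
      nlinarith
  · rintro ⟨R, M, hM, hP⟩
    have hR : 0 < R := pos_of_mul_pos_left (hP.mul_eq ▸ by omega) hM.le
    have hM1 : M ≠ 1 := by rintro rfl; have := hP.2.2.1; omega
    obtain ⟨hn, hk, hd', he⟩ := hP
    rcases Int.even_or_odd' (R + M) with ⟨ℓ, hℓ | hℓ⟩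
    · obtain rfl : R = 2 * ℓ - M := by omega
      exact .inl ⟨ℓ - M, ℓ, by omega, by omega, by omega, by omega, by omega,
        by linear_combination hn, by linear_combination hk, by linear_combination he,
        by linear_combination hd'⟩
    · obtain rfl : R = 2 * ℓ + 1 - M := by omega
      refine .inr ⟨ℓ - M + 1, ℓ, ?_, by omega, by omega, by omega, by omega, by omega,
        by linear_combination hn, by linear_combination hk, by linear_combination he,
        by linear_combination hd'⟩
      rintro h0
      exact hconf (by linear_combination hn - 2 * hk + (4 * ℓ) * h0)

variable {r s : ℝ}

theorem mul_one_add_eq_iff_conferenceParams (hconf : (n : ℤ) = 2 * k + 1) (hd : 0 < d) (hk : 0 < k)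
    (hparam : (k : ℤ) * (k - e - 1) = (n - k - 1) * d) (hsum : r + s = e - d) :
    k * (1 + r) = (n - 1 - k) * -s ↔ ConferenceParams n k e d := by
  have hnR : (n : ℝ) = 2 * k + 1 := by exact_mod_cast hconf
  have hkR : (k : ℝ) ≠ 0 := by positivity
  have hkde : (k : ℤ) = d + e + 1 := mul_left_cancel₀ (by omega : (k : ℤ) ≠ 0) <| by
    linear_combination hparam + d * hconf
  constructor
  · intro hkey
    have hed : (e : ℝ) + 1 = d := by
      have := (mul_eq_zero.mp (by linear_combination hkey - s * hnR - k * hsum :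
        (k : ℝ) * (e + 1 - d) = 0)).resolve_left hkR
      linarith
    have hed : e + 1 = d := by exact_mod_cast hed
    exact ⟨hd, by omega, by omega, hed⟩
  · rintro ⟨-, -, -, hed⟩
    have hed : (e : ℝ) + 1 = d := by exact_mod_cast hed
    linear_combination k * hsum + k * hed + s * hnR

theorem mul_one_add_eq_iff_exists_squareParams (hconf : (n : ℤ) ≠ 2 * k + 1) (hdk : d < k)
    (hkn : k + 1 < n) (hparam : (k : ℤ) * (k - e - 1) = (n - k - 1) * d)
    (hsum : r + s = e - d) (hprod : r * s = d - k) (hr : 0 < r) (hs : s < 0) :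
    k * (1 + r) = (n - 1 - k) * -s ↔ ∃ R M : ℤ, 0 < M ∧ SquareParams n k e d R M := by
  constructor
  · intro hkey
    obtain ⟨R, rfl⟩ : ∃ R : ℤ, r = R :=
      Real.exists_intCast_eq_of_mul_eq_of_sq_eq (m := 2 * k + 1 - n) (a := e - d) (b := k - d)
        (c := -((n - 1 - k) * (e - d) + k)) (by omega)
        (by push_cast; linear_combination hkey - (n - 1 - k) * hsum)
        (by push_cast; linear_combination r * hsum - hprod)
    obtain rfl : s = -((R - e + d : ℤ) : ℝ) := by push_cast; linarith
    have hM : 0 < R - e + d := by exact_mod_cast neg_lt_zero.mp hs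
    refine ⟨R, R - e + d, hM, squareParams_of_mul_one_add_eq hkn hM.ne' hparam (by ring) ?_ ?_⟩
    · exact_mod_cast (by push_cast at hprod ⊢; linear_combination -hprod :
        ((R * (R - e + d) : ℤ) : ℝ) = ((k - d : ℤ) : ℝ))
    · exact_mod_cast (by push_cast at hkey ⊢; linear_combination hkey :
        ((k * (1 + R) : ℤ) : ℝ) = (((n - 1 - k) * (R - e + d) : ℤ) : ℝ))
  · rintro ⟨R, M, hM, hP⟩
    have hR : 0 < R := pos_of_mul_pos_left (hP.mul_eq ▸ by omega) hM.le
    have he : (e : ℝ) = d + R - M := by exact_mod_cast hP.2.2.2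
    have hRM : (R : ℝ) * M = k - d := by exact_mod_cast hP.mul_eq
    obtain ⟨rfl, rfl⟩ : r = R ∧ s = -M := eq_and_eq_of_add_eq_add_of_mul_eq_mul (by linarith)
      (by exact_mod_cast (by omega : -M < R)) (by linear_combination hsum + he)
      (by linear_combination hprod + hRM)
    rw [neg_neg]
    exact_mod_cast hP.mul_one_add_eq

theorem mul_one_add_eq_iff_params (hd : 0 < d) (hdk : d < k) (hkn : k + 1 < n)
    (hparam : (k : ℤ) * (k - e - 1) = (n - k - 1) * d)
    (hsum : r + s = e - d) (hprod : r * s = d - k) (hr : 0 < r) (hs : s < 0) :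
    k * (1 + r) = (n - 1 - k) * -s ↔
      ConferenceParams n k e d ∨ EvenSquareParams n k e d ∨ OddSquareParams n k e d := by
  by_cases hconf : (n : ℤ) = 2 * k + 1
  · rw [mul_one_add_eq_iff_conferenceParams hconf hd (hd.trans hdk) hparam hsum,
      or_iff_left_of_imp]
    rintro (h | h)
    exacts [(h.ne hconf).elim, (h.ne hconf).elim]
  · rw [mul_one_add_eq_iff_exists_squareParams hconf hdk hkn hparam hsum hprod hr hs,
      ← evenSquareParams_or_oddSquareParams_iff hd hdk hconf]
    exact (or_iff_right fun h ↦ hconf h.eq).symm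

end Parameters

namespace Matrix.IsHermitian

variable {ι : Type*} [Fintype ι] [DecidableEq ι]

theorem trace_mul_self_eq_sum_sq_eigenvalues {𝕜 : Type*} [RCLike 𝕜] {A : Matrix ι ι 𝕜}
    (hA : A.IsHermitian) : (A * A).trace = ∑ i, (hA.eigenvalues i : 𝕜) ^ 2 := by
  conv_lhs => rw [hA.spectral_theorem, ← map_mul, Unitary.conjStarAlgAut_apply, trace_mul_cycle,
    Unitary.coe_star_mul_self, one_mul, diagonal_mul_diagonal, trace_diagonal]
  simp [sq]

theorem eval_eigenvalues_eq_zero {A : Matrix ι ι ℝ} (hA : A.IsHermitian) {p : ℝ[X]}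
    (hp : aeval A p = 0) (i : ι) : p.eval (hA.eigenvalues i) = 0 := by
  have : Nonempty ι := ⟨i⟩
  simpa [hp, spectrum.zero_eq] using
    spectrum.subset_polynomial_aeval A p ⟨_, hA.eigenvalues_mem_spectrum_real i, rfl⟩

end Matrix.IsHermitian

theorem Matrix.cubic_eq_zero_of_quadratic_eq_smul_of_one {ι α : Type*} [Fintype ι] [DecidableEq ι]
    [CommRing α] {A : Matrix ι ι α} {k r s c : α} (hA : A * of 1 = k • of 1)
    (h : (A - r • 1) * (A - s • 1) = c • of 1) :
    (A - k • 1) * (A - r • 1) * (A - s • 1) = 0 := by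
  rw [mul_assoc, h, mul_smul_comm, sub_mul, hA, smul_mul_assoc, one_mul, sub_self, smul_zero]

theorem Matrix.of_one_mul_of_one {ι α : Type*} [Fintype ι] [NonAssocSemiring α] :
    (of 1 : Matrix ι ι α) * of 1 = (Fintype.card ι : α) • of 1 := by
  ext; simp [mul_apply]

namespace SimpleGraph

variable {V : Type*} {G : SimpleGraph V}

theorem Connected.exists_adj_adj_not_adj (hG : G.Connected) {u v : V} (hne : u ≠ v)
    (hnadj : ¬G.Adj u v) : ∃ x a b, G.Adj x a ∧ G.Adj a b ∧ ¬G.Adj x b ∧ x ≠ b := by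
  obtain ⟨p, hp⟩ := hG.exists_walk_length_eq_dist u v
  exact Walk.exists_adj_adj_not_adj_ne hp (hG.one_lt_dist_of_ne_of_not_adj hne hnadj)

variable [DecidableRel G.Adj]

variable (G) in
theorem adjMatrix_compl_eq {α : Type*} [AddGroupWithOne α] [DecidableEq V] :
    Gᶜ.adjMatrix α = of 1 - 1 - G.adjMatrix α := by
  ext u v
  by_cases huv : u = v
  · simp [huv]
  · by_cases hadj : G.Adj u v <;> simp [huv, hadj, one_apply_ne huv]

variable [Fintype V]

theorem card_commonNeighbors_lt_degree_of_adj_of_not_adj {v w x : V} (hvx : G.Adj v x)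
    (hwx : ¬G.Adj w x) : Fintype.card (G.commonNeighbors v w) < G.degree v := by
  classical
  rw [← Set.toFinset_card]
  refine Finset.card_lt_card <| Finset.ssubset_iff.mpr ⟨x, by simp [mem_commonNeighbors, hwx], ?_⟩
  simpa [Finset.insert_subset_iff, G.commonNeighbors_subset_neighborSet_left v w]

theorem IsRegularOfDegree.adjMatrix_mul_of_one {α : Type*} [NonAssocSemiring α] {k : ℕ}
    (h : G.IsRegularOfDegree k) : G.adjMatrix α * of 1 = (k : α) • of 1 := by
  ext; simp [h.degree_eq]

theorem IsRegularOfDegree.of_one_mul_adjMatrix {α : Type*} [NonAssocSemiring α] {k : ℕ}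
    (h : G.IsRegularOfDegree k) : of 1 * G.adjMatrix α = (k : α) • of 1 := by
  ext; simp [h.degree_eq]

namespace IsSRGWith

variable {n k ℓ μ : ℕ}

theorem pos_mu (h : G.IsSRGWith n k ℓ μ) (hG : G.Connected) (htop : G ≠ ⊤) : 0 < μ := by
  obtain ⟨u, v, huv, hnadj⟩ := ne_top_iff_exists_not_adj.mp htop
  obtain ⟨x, a, b, hxa, hab, hxb, hne⟩ := hG.exists_adj_adj_not_adj huv hnadj
  rw [← h.of_not_adj hne hxb]
  exact Fintype.card_pos_iff.mpr ⟨⟨a, hxa, hab.symm⟩⟩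

theorem mu_lt_k (h : G.IsSRGWith n k ℓ μ) (hGc : Gᶜ.Connected) (hbot : G ≠ ⊥) : μ < k := by
  obtain ⟨u, v, huv⟩ := ne_bot_iff_exists_adj.mp hbot
  -- `x, a, b` start a shortest path in `Gᶜ`, so `b` is a neighbour of `x` but not of `a`.
  obtain ⟨x, a, b, hxa, hab, hxb, hne⟩ := hGc.exists_adj_adj_not_adj huv.ne (by simp [huv])
  rw [compl_adj] at hxa hab hxb
  have hxb : G.Adj x b := by tauto
  rw [← h.of_not_adj hxa.1 hxa.2, ← h.regular x]
  exact card_commonNeighbors_lt_degree_of_adj_of_not_adj hxb hab.2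

theorem ell_lt_k (h : G.IsSRGWith n k ℓ μ) (hbot : G ≠ ⊥) : ℓ < k := by
  obtain ⟨u, v, huv⟩ := ne_bot_iff_exists_adj.mp hbot
  rw [← h.of_adj u v huv, ← h.regular u]
  exact huv.card_commonNeighbors_lt_degree

theorem k_add_one_lt (h : G.IsSRGWith n k ℓ μ) (htop : G ≠ ⊤) : k + 1 < n := by
  classical
  obtain ⟨u, v, huv, hnadj⟩ := ne_top_iff_exists_not_adj.mp htop
  have := (show Gᶜ.Adj u v from ⟨huv, hnadj⟩).degree_pos_left
  rw [degree_compl, h.regular u, h.card] at this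
  omega

variable [DecidableEq V] {α : Type*} [CommRing α] {r s : α}

theorem adjMatrix_sub_smul_mul_adjMatrix_sub_smul (h : G.IsSRGWith n k ℓ μ)
    (hsum : r + s = ℓ - μ) (hprod : r * s = μ - k) :
    (G.adjMatrix α - r • 1) * (G.adjMatrix α - s • 1) = (μ : α) • of 1 := by
  have hA := h.matrix_eq (α := α)
  rw [adjMatrix_compl_eq, sq] at hA
  calc (G.adjMatrix α - r • 1) * (G.adjMatrix α - s • 1)
      = G.adjMatrix α * G.adjMatrix α - (r + s) • G.adjMatrix α + (r * s) • 1 := by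
        simp only [sub_mul, mul_sub, smul_mul_assoc, mul_smul_comm, one_mul, mul_one]
        module
    _ = (μ : α) • of 1 := by
        rw [hA, hsum, hprod]
        simp only [← Nat.cast_smul_eq_nsmul α]
        module

theorem compl_adjMatrix_sub_smul_mul (h : G.IsSRGWith n k ℓ μ)
    (hsum : r + s = ℓ - μ) (hprod : r * s = μ - k) :
    (Gᶜ.adjMatrix α - (-1 - s) • 1) * (Gᶜ.adjMatrix α - (-1 - r) • 1) =
      (Fintype.card V - 2 * k + r + s + μ : α) • of 1 := by
  have hsr := h.adjMatrix_sub_smul_mul_adjMatrix_sub_smul (α := α) (add_comm r s ▸ hsum)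
    (mul_comm r s ▸ hprod)
  rw [adjMatrix_compl_eq,
    show of 1 - 1 - G.adjMatrix α - (-1 - s) • 1 = of 1 - (G.adjMatrix α - s • 1) by module,
    show of 1 - 1 - G.adjMatrix α - (-1 - r) • 1 = of 1 - (G.adjMatrix α - r • 1) by module,
    sub_mul, mul_sub (of 1), mul_sub (G.adjMatrix α - s • 1), hsr]
  simp only [sub_mul, mul_sub, of_one_mul_of_one, h.regular.adjMatrix_mul_of_one,
    h.regular.of_one_mul_adjMatrix, smul_mul_assoc, mul_smul_comm, one_mul, mul_one]
  module

end IsSRGWith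

variable [DecidableEq V]

variable (G) in
theorem energy_eq_sum_abs_eigenvalues :
    energy G = ∑ i, |(adjMatrix_isHermitian G).eigenvalues i| := by
  unfold energy adjEig
  congr!

variable (G) in
theorem sum_eigenvalues_adjMatrix : ∑ i, (adjMatrix_isHermitian G).eigenvalues i = 0 := by
  simpa using ((adjMatrix_isHermitian G).trace_eq_sum_eigenvalues).symm.trans (G.trace_adjMatrix ℝ)

theorem IsRegularOfDegree.sum_sq_eigenvalues_adjMatrix {k : ℕ} (h : G.IsRegularOfDegree k) :
    ∑ i, (adjMatrix_isHermitian G).eigenvalues i ^ 2 = Fintype.card V * k := by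
  have := (adjMatrix_isHermitian G).trace_mul_self_eq_sum_sq_eigenvalues
  simp only [RCLike.ofReal_real_eq_id, id] at this
  rw [← this]
  simp only [trace, diag_apply, adjMatrix_mul_self_apply_self, h.degree_eq, sum_const, card_univ,
    nsmul_eq_mul]

theorem energy_eq_of_adjMatrix_cubic {k : ℕ} (hreg : G.IsRegularOfDegree k) {r s : ℝ}
    (hr : 0 ≤ r) (hs : s < 0)
    (hA : (G.adjMatrix ℝ - (k : ℝ) • 1) * (G.adjMatrix ℝ - r • 1) * (G.adjMatrix ℝ - s • 1) = 0) :
    energy G = 2 * Fintype.card V * k * (1 + r) * -s / ((k - s) * (r - s)) := by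
  set eig := (adjMatrix_isHermitian G).eigenvalues
  have hroots (i : V) : eig i = k ∨ eig i = r ∨ eig i = s := by
    have := (adjMatrix_isHermitian G).eval_eigenvalues_eq_zero
      (p := (X - C (k : ℝ)) * (X - C r) * (X - C s))
      (by simpa only [map_mul, map_sub, aeval_X, aeval_C, Algebra.algebraMap_eq_smul_one]) i
    simpa [sub_eq_zero, or_assoc] using this
  set γ := 2 * s / ((k - s) * (r - s))
  have hsum : ∑ i, |eig i| = ∑ i, ((1 + γ * (k + r)) * eig i - γ * eig i ^ 2 - γ * k * r) :=
    Finset.sum_congr rfl fun i _ ↦ by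
      rw [abs_eq_of_eq_or_eq_or_eq (Nat.cast_nonneg k) hr hs (hroots i)]
      ring
  simp only [Finset.sum_sub_distrib, ← Finset.mul_sum, Finset.sum_const, Finset.card_univ,
    nsmul_eq_mul] at hsum
  rw [energy_eq_sum_abs_eigenvalues, hsum, sum_eigenvalues_adjMatrix,
    hreg.sum_sq_eigenvalues_adjMatrix]
  have : (k : ℝ) - s ≠ 0 := by linarith [(Nat.cast_nonneg k : (0 : ℝ) ≤ k)]
  have : r - s ≠ 0 := by linarith
  simp only [γ]
  field_simp
  ring

theorem IsSRGWith.energy_eq_energy_compl_iff {n k ℓ μ : ℕ} (h : G.IsSRGWith n k ℓ μ)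
    (hkn : k < n) {r s : ℝ} (hsum : r + s = ℓ - μ) (hprod : r * s = μ - k) (hr : 0 ≤ r)
    (hs : s ≤ -1) :
    energy G = energy Gᶜ ↔ k * (1 + r) = (n - 1 - k) * -s := by
  have hcubic := cubic_eq_zero_of_quadratic_eq_smul_of_one h.regular.adjMatrix_mul_of_one
    (h.adjMatrix_sub_smul_mul_adjMatrix_sub_smul hsum hprod)
  have hcubicc := cubic_eq_zero_of_quadratic_eq_smul_of_one h.regular.compl.adjMatrix_mul_of_one
    (h.compl_adjMatrix_sub_smul_mul hsum hprod)
  rw [energy_eq_of_adjMatrix_cubic h.regular hr (by linarith) hcubic,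
    energy_eq_of_adjMatrix_cubic h.regular.compl (by linarith) (by linarith) hcubicc, h.card,
    Nat.cast_sub (by omega), Nat.cast_sub (by omega), Nat.cast_one]
  have hn : (0 : ℝ) < n := by exact_mod_cast (by omega : 0 < n)
  have hk : (k : ℝ) + 1 ≤ n := by exact_mod_cast hkn
  have hC : 0 < 2 * n * (1 + r) * -s * (r - s) :=
    mul_pos (mul_pos (mul_pos (by positivity) (by linarith)) (by linarith)) (by linarith)
  -- Both energies carry the factor `2 n (1 + r) (-s) / (r - s)`.
  rw [div_eq_div_iff (by nlinarith) (by nlinarith)]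
  constructor
  · intro H
    exact mul_left_cancel₀ hC.ne' (by linear_combination H)
  · intro H
    linear_combination (2 * n * (1 + r) * -s * (r - s)) * H

end SimpleGraph

/-- Classification of the parameters of primitive strongly regular graphs
equienergetic with their complements: conference graphs, or the two parameter families
of Theorem 4.4 of the paper. -/
theorem srg_equienergetic_parameter_classification {V : Type*} [Fintype V] [DecidableEq V]
    (G : SimpleGraph V) [DecidableRel G.Adj] (n k e d : ℕ)
    (h : G.IsSRGWith n k e d) (hn : 2 ≤ n) (hG : G.Connected) (hGc : Gᶜ.Connected) :
    energy G = energy Gᶜ ↔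
      ((1 ≤ d ∧ n = 4 * d + 1 ∧ k = 2 * d ∧ e + 1 = d) ∨
       (∃ h' ℓ : ℤ, 1 ≤ ℓ ∧ ℓ ≠ h' ∧ ℓ ≠ -h' ∧ ℓ ≠ h' + 1 ∧ ℓ ≠ -(h' + 1) ∧
          (n : ℤ) = 4 * ℓ ^ 2 ∧ (k : ℤ) = (ℓ - h') * (2 * ℓ - 1) ∧
          (e : ℤ) = (d : ℤ) + 2 * h' ∧ (d : ℤ) = (ℓ - h') * (ℓ - h' - 1)) ∨
       (∃ h' ℓ : ℤ, h' ≠ 0 ∧ 1 ≤ ℓ ∧ ℓ ≠ h' ∧ ℓ ≠ -h' ∧ ℓ ≠ -(h' + 1) ∧ ℓ ≠ h' - 1 ∧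
          (n : ℤ) = (2 * ℓ + 1) ^ 2 ∧ (k : ℤ) = 2 * ℓ * (ℓ - h' + 1) ∧
          (e : ℤ) = (d : ℤ) + 2 * h' - 1 ∧ (d : ℤ) = (ℓ - h') * (ℓ - h' + 1))) := by
  have : Nontrivial V := Fintype.one_lt_card_iff_nontrivial.mp (h.card ▸ hn)
  have hbot : G ≠ ⊥ := fun hbot ↦ SimpleGraph.not_connected_bot (hbot ▸ hG)
  have htop : G ≠ ⊤ := fun htop ↦ SimpleGraph.not_connected_bot (by simpa [htop] using hGc)
  have hd := h.pos_mu hG htop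
  have hdk := h.mu_lt_k hGc hbot
  have hek := h.ell_lt_k hbot
  have hkn := h.k_add_one_lt htop
  have hparam : (k : ℤ) * (k - e - 1) = (n - k - 1) * d := by
    have := SimpleGraph.IsSRGWith.param_eq G h (by omega)
    rw [Nat.sub_sub, Nat.sub_sub] at this
    zify [show e + 1 ≤ k by omega, show k + 1 ≤ n by omega] at this
    linear_combination this
  obtain ⟨r, s, hr, hs, hsum, hprod⟩ := exists_pos_neg_add_eq_mul_eq ((e : ℝ) - d)
    (q := (d : ℝ) - k) (sub_neg.mpr (by exact_mod_cast hdk))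
  have hs1 : s ≤ -1 := by
    -- `(r + 1) (s + 1) = e + 1 - k ≤ 0`
    have : (e : ℝ) + 1 ≤ k := by exact_mod_cast hek
    nlinarith
  rw [h.energy_eq_energy_compl_iff (by omega) hsum hprod hr.le hs1]
  exact mul_one_add_eq_iff_params hd hdk hkn hparam hsum hprod hr hs
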